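/- Let Λ be a free ℤ-module of finite rank and c : Λ → Λ a ℤ-linear involution such that rank Λ⁺ = rank Λ⁻. Then #(Λ⁻/(c−1)Λ) = #(Λ⁺/(c+1)Λ). -/

import Mathlib

/-!
Write `Λ⁺ = ker (c - 1)`, `Λ⁻ = ker (c + 1)`. The chain `2Λ⁻ ≤ (c - 1)Λ ≤ Λ⁻` gives
`[Λ⁻ : 2Λ⁻] = [(c - 1)Λ : 2Λ⁻] · [Λ⁻ : (c - 1)Λ]`, where `[Λ⁻ : 2Λ⁻] = 2 ^ rank Λ⁻`,
and `x ↦ (c - 1)x` identifies `Λ / (Λ⁺ + Λ⁻)` with `(c - 1)Λ / 2Λ⁻`. Hence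
`[Λ : Λ⁺ + Λ⁻] · #(Λ⁻ / (c - 1)Λ) = 2 ^ rank Λ⁻`. The same identity for the involution `-c`
swaps the roles of `Λ⁺` and `Λ⁻`, so equal ranks let us cancel the common factor
`[Λ : Λ⁺ + Λ⁻]`.
-/

open LinearMap Module

lemma Submodule.relIndex_map_nsmul {Λ : Type*} [AddCommGroup Λ] [Module ℤ Λ] [Free ℤ Λ]
    [Module.Finite ℤ Λ] (K : Submodule ℤ Λ) (n : ℕ) :
    (K.toAddSubgroup.map (nsmulAddMonoidHom n)).relIndex K.toAddSubgroup = n ^ finrank ℤ K := by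
  -- ℤ-module structures are unique; for the canonical one, `K.toAddSubgroup.toIntSubmodule` is `K`.
  obtain rfl := Subsingleton.elim ‹Module ℤ Λ› (AddCommGroup.toIntModule Λ)
  exact AddSubgroup.relIndex_map_nsmul n K.toAddSubgroup

namespace LinearMap

section Involution

variable {R M : Type*} [Ring R] [AddCommGroup M] [Module R M] {c : M →ₗ[R] M}

lemma range_sub_id_le_ker_add_id (hc : c ∘ₗ c = id) : range (c - id) ≤ ker (c + id) := by
  rintro _ ⟨x, rfl⟩
  have hcx : c (c x) = x := congr($hc x)
  simp [hcx]

lemma map_two_nsmul_ker_add_id_le_range_sub_id :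
    (ker (c + id)).toAddSubgroup.map (nsmulAddMonoidHom 2) ≤ (range (c - id)).toAddSubgroup := by
  rintro _ ⟨y, hy, rfl⟩
  have hcy : c y = -y := eq_neg_of_add_eq_zero_left hy
  exact ⟨-y, by simp [hcy, two_nsmul]⟩

lemma comap_sub_id_map_two_nsmul_ker_add_id :
    ((ker (c + id)).toAddSubgroup.map (nsmulAddMonoidHom 2)).comap (c - id).toAddMonoidHom =
      (ker (c - id) ⊔ ker (c + id)).toAddSubgroup := by
  ext x
  simp only [AddSubgroup.mem_comap, AddSubgroup.mem_map, Submodule.mem_toAddSubgroup,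
    Submodule.mem_sup, mem_ker, toAddMonoidHom_coe, sub_apply, add_apply, id_apply,
    nsmulAddMonoidHom_apply, sub_eq_zero, add_eq_zero_iff_eq_neg]
  constructor
  · rintro ⟨y, hcy, hxy⟩
    have hcx : c x = x + 2 • y := by rw [hxy]; abel
    exact ⟨x + y, by rw [map_add, hcx, hcy]; abel, -y, by rw [map_neg, hcy], by abel⟩
  · rintro ⟨u, hcu, v, hcv, rfl⟩
    exact ⟨-v, by rw [map_neg, hcv], by rw [map_add, hcu, hcv]; abel⟩

end Involution

lemma index_sup_ker_mul_relIndex_range_sub_id {Λ : Type*} [AddCommGroup Λ] [Module ℤ Λ]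
    [Free ℤ Λ] [Module.Finite ℤ Λ] {c : Λ →ₗ[ℤ] Λ} (hc : c ∘ₗ c = id) :
    (ker (c - id) ⊔ ker (c + id)).toAddSubgroup.index *
        (range (c - id)).toAddSubgroup.relIndex (ker (c + id)).toAddSubgroup =
      2 ^ finrank ℤ (ker (c + id)) := by
  rw [← comap_sub_id_map_two_nsmul_ker_add_id, AddSubgroup.index_comap, ← range_toAddSubgroup,
    AddSubgroup.relIndex_mul_relIndex _ _ _ map_two_nsmul_ker_add_id_le_range_sub_id
      (range_sub_id_le_ker_add_id hc),
    Submodule.relIndex_map_nsmul]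

end LinearMap

/-- Let `Λ` be a free `ℤ`-module of finite rank and `c : Λ → Λ` a `ℤ`-linear involution
such that `rank Λ⁺ = rank Λ⁻`.  Then `#(Λ⁻/(c−1)Λ) = #(Λ⁺/(c+1)Λ)`,
where `Λ⁺ = ker (c - 1)`, `Λ⁻ = ker (c + 1)`. -/
theorem card_quotient_eq_of_finrank_eq (Λ : Type*) [AddCommGroup Λ] [Module ℤ Λ]
    [Module.Free ℤ Λ] [Module.Finite ℤ Λ]
    (c : Λ →ₗ[ℤ] Λ) (hc : c ∘ₗ c = LinearMap.id)
    (hrank : Module.finrank ℤ (LinearMap.ker (c - LinearMap.id)) =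
      Module.finrank ℤ (LinearMap.ker (c + LinearMap.id))) :
    Nat.card ((LinearMap.ker (c + LinearMap.id)).toAddSubgroup ⧸
        (LinearMap.range (c - LinearMap.id)).toAddSubgroup.addSubgroupOf
          (LinearMap.ker (c + LinearMap.id)).toAddSubgroup) =
    Nat.card ((LinearMap.ker (c - LinearMap.id)).toAddSubgroup ⧸
        (LinearMap.range (c + LinearMap.id)).toAddSubgroup.addSubgroupOf
          (LinearMap.ker (c - LinearMap.id)).toAddSubgroup) := by
  have hminus := index_sup_ker_mul_relIndex_range_sub_id hc
  have hplus := index_sup_ker_mul_relIndex_range_sub_id (c := -c) (by simpa using hc)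
  rw [← neg_add', neg_add_eq_sub, ← neg_sub, ker_neg, ker_neg, range_neg, sup_comm, hrank,
    ← hminus] at hplus
  have hindex : 0 < (ker (c - LinearMap.id) ⊔ ker (c + LinearMap.id)).toAddSubgroup.index :=
    Nat.pos_of_mul_pos_right (hminus ▸ Nat.two_pow_pos _)
  exact (Nat.eq_of_mul_eq_mul_left hindex hplus).symm
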